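/- arXiv:1501.01995 — 5 statements merged into one kernel-verified Lean document; each statement's English description precedes it below -/
import Mathlib

section
/- The function h(t) = t³·cos(t)/sin³(t), extended by continuity at 0 (with h(0) = 1), is decreasing on [0, π/2]. -/
open Real Set

/-!
Writing `h t = cos t / sinc t ^ 3` makes continuity at `0` automatic. On `(0, π/2)`,
`h' t = t² (3 sin t cos t - t (sin² t + 3 cos² t)) / sin⁴ t`, and with `u = 2t` the sign
condition becomes the Cusa–Huygens inequality `3 sin u ≤ u (2 + cos u)` on `[0, π]`. That
follows from three successive monotonicity arguments, each function vanishing at `0` and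
having the previous one (times a nonnegative factor) as derivative.
-/

lemma nonneg_of_hasDerivAt_of_nonneg {f f' : ℝ → ℝ} {a b : ℝ}
    (hf : ∀ x, HasDerivAt f (f' x) x) (ha : 0 ≤ f a) (hf' : ∀ x ∈ Ioo a b, 0 ≤ f' x)
    {x : ℝ} (hx : x ∈ Icc a b) : 0 ≤ f x := by
  have hmono : MonotoneOn f (Icc a b) :=
    monotoneOn_of_hasDerivWithinAt_nonneg (convex_Icc a b)
      (fun y _ => (hf y).continuousAt.continuousWithinAt)
      (fun y _ => (hf y).hasDerivWithinAt) (by rwa [interior_Icc])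
  exact ha.trans (hmono (left_mem_Icc.2 (hx.1.trans hx.2)) hx hx.1)

lemma mul_cos_le_sin {x : ℝ} (hx : x ∈ Icc 0 π) : x * cos x ≤ sin x := by
  have hd : ∀ y, HasDerivAt (fun y => sin y - y * cos y) (y * sin y) y := fun y =>
    ((hasDerivAt_sin y).sub ((hasDerivAt_id' y).mul (hasDerivAt_cos y))).congr_deriv (by ring)
  have := nonneg_of_hasDerivAt_of_nonneg hd (by simp)
    (fun y hy => mul_nonneg hy.1.le (sin_nonneg_of_nonneg_of_le_pi hy.1.le hy.2.le)) hx
  linarith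

lemma mul_sin_le_two_sub_two_mul_cos {x : ℝ} (hx : x ∈ Icc 0 π) :
    x * sin x ≤ 2 - 2 * cos x := by
  have hd : ∀ y, HasDerivAt (fun y => 2 - 2 * cos y - y * sin y) (sin y - y * cos y) y :=
    fun y =>
      (((hasDerivAt_cos y).const_mul 2).const_sub 2 |>.sub
        ((hasDerivAt_id' y).mul (hasDerivAt_sin y))).congr_deriv (by ring)
  have := nonneg_of_hasDerivAt_of_nonneg hd (by simp)
    (fun y hy => sub_nonneg.2 (mul_cos_le_sin (Ioo_subset_Icc_self hy))) hx
  linarith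

theorem three_mul_sin_le_mul_two_add_cos {x : ℝ} (hx : x ∈ Icc 0 π) :
    3 * sin x ≤ x * (2 + cos x) := by
  have hd : ∀ y, HasDerivAt (fun y => y * (2 + cos y) - 3 * sin y)
      (2 - 2 * cos y - y * sin y) y := fun y =>
    (((hasDerivAt_id' y).mul ((hasDerivAt_cos y).const_add 2)).sub
      ((hasDerivAt_sin y).const_mul 3)).congr_deriv (by ring)
  have := nonneg_of_hasDerivAt_of_nonneg hd (by simp)
    (fun y hy => sub_nonneg.2 (mul_sin_le_two_sub_two_mul_cos (Ioo_subset_Icc_self hy))) hx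
  linarith

lemma three_mul_sin_mul_cos_le {t : ℝ} (ht : t ∈ Icc 0 (π / 2)) :
    3 * sin t * cos t ≤ t * (sin t ^ 2 + 3 * cos t ^ 2) := by
  have h := three_mul_sin_le_mul_two_add_cos (x := 2 * t)
    ⟨by linarith [ht.1], by linarith [ht.2]⟩
  rw [sin_two_mul, cos_two_mul] at h
  linear_combination h / 2 - t * sin_sq_add_cos_sq t

lemma sinc_pos {x : ℝ} (hx : x ∈ Ioo (-π) π) : 0 < sinc x := by
  rcases lt_trichotomy x 0 with h | rfl | h
  · rw [sinc_of_ne_zero h.ne]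
    exact div_pos_of_neg_of_neg (sin_neg_of_neg_of_neg_pi_lt h hx.1) h
  · simp [sinc_zero]
  · rw [sinc_of_ne_zero h.ne']
    exact div_pos (sin_pos_of_pos_of_lt_pi h hx.2) h

lemma cos_div_sinc_pow_three {t : ℝ} (ht : t ≠ 0) :
    cos t / sinc t ^ 3 = t ^ 3 * cos t / sin t ^ 3 := by
  rw [sinc_of_ne_zero ht, div_pow, div_div_eq_mul_div, mul_comm]

lemma hasDerivAt_cos_div_sinc_pow_three {x : ℝ} (hx : x ∈ Ioo 0 π) :
    HasDerivAt (fun t => cos t / sinc t ^ 3)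
      (x ^ 2 * (3 * sin x * cos x - x * (sin x ^ 2 + 3 * cos x ^ 2)) / sin x ^ 4) x := by
  have hsin : sin x ≠ 0 := (sin_pos_of_pos_of_lt_pi hx.1 hx.2).ne'
  have hF : HasDerivAt (fun t => t ^ 3 * cos t / sin t ^ 3)
      (((3 * x ^ 2 * cos x + x ^ 3 * -sin x) * sin x ^ 3
        - x ^ 3 * cos x * (3 * sin x ^ 2 * cos x)) / (sin x ^ 3) ^ 2) x :=
    (((hasDerivAt_pow 3 x).mul (hasDerivAt_cos x)).div
      ((hasDerivAt_sin x).pow 3) (pow_ne_zero 3 hsin)).congr_deriv (by norm_num)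
  refine (hF.congr_deriv ?_).congr_of_eventuallyEq ?_
  · field_simp; ring
  · filter_upwards [isOpen_compl_singleton.mem_nhds hx.1.ne'] with t ht
    exact cos_div_sinc_pow_three ht

theorem antitoneOn_cos_div_sinc_pow_three :
    AntitoneOn (fun t => cos t / sinc t ^ 3) (Icc 0 (π / 2)) := by
  have hsinc : ∀ t ∈ Icc 0 (π / 2), sinc t ≠ 0 := fun t ht =>
    (sinc_pos ⟨by linarith [ht.1, pi_pos], by linarith [ht.2, pi_pos]⟩).ne'
  refine antitoneOn_of_hasDerivWithinAt_nonpos (convex_Icc 0 (π / 2))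
    (f' := fun x => x ^ 2 * (3 * sin x * cos x - x * (sin x ^ 2 + 3 * cos x ^ 2)) / sin x ^ 4)
    (fun t ht => (continuous_cos.continuousAt.div (continuous_sinc.continuousAt.pow 3)
      (pow_ne_zero 3 (hsinc t ht))).continuousWithinAt)
    (fun x hx => ?_) fun x hx => ?_ <;> rw [interior_Icc] at hx
  · exact (hasDerivAt_cos_div_sinc_pow_three
      ⟨hx.1, by linarith [hx.2, pi_pos]⟩).hasDerivWithinAt
  · exact div_nonpos_of_nonpos_of_nonneg (mul_nonpos_of_nonneg_of_nonpos (sq_nonneg x)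
      (sub_nonpos.2 (three_mul_sin_mul_cos_le (Ioo_subset_Icc_self hx)))) (by positivity)

theorem h_decreasing :
    AntitoneOn (fun t : ℝ => if t = 0 then 1 else t ^ 3 * Real.cos t / (Real.sin t) ^ 3)
      (Set.Icc 0 (π / 2)) := by
  convert antitoneOn_cos_div_sinc_pow_three using 2 with t
  split_ifs with ht
  · simp [ht, sinc_zero]
  · exact (cos_div_sinc_pow_three ht).symm
end

section
/- For every integer A ≥ 4 and every t ∈ [0, π/2], if |sin(A·t)/(A·sin(t))| ≥ 1/3 then t ≤ π/A. (For t = 0 interpret sin(A·t)/(A·sin(t)) as its continuous extension, which equals 1.) -/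
/-!
Suppose `t > π / A` and put `s = A t > π`. Then `|sin s| ≤ min 1 (s - π)`, while `A sin t` is
bounded below by `s - s³ / 96` (from `sin t ≥ t - t³ / 6` and `t ≤ s / 4`) and by `2 s / π`
(Jordan's inequality). The first bound beats `3 |sin s|` for `s ≤ 5`, the second for `s > 5`,
so `|G_A(t)| < 1 / 3`.
-/

open Real Set

lemma abs_sin_le_sub_pi {s : ℝ} (hs : π ≤ s) : |sin s| ≤ s - π := by
  simpa [sin_sub_pi, abs_of_nonneg (sub_nonneg.mpr hs)] using abs_sin_le_abs (x := s - π)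

lemma mul_sub_cube_le_mul_sin {a t : ℝ} (ha : 4 ≤ a) (ht : 0 ≤ t) :
    a * t - (a * t) ^ 3 / 96 ≤ a * sin t := by
  have hcube : a * t ^ 3 / 6 ≤ (a * t) ^ 3 / 96 := by
    have : 16 * (a * t ^ 3) ≤ a ^ 2 * (a * t ^ 3) :=
      mul_le_mul_of_nonneg_right (by nlinarith) (by positivity)
    nlinarith
  nlinarith [mul_le_mul_of_nonneg_left (sin_ge_sub_cube ht) (by linarith : (0 : ℝ) ≤ a)]

lemma three_mul_abs_sin_lt_sub_cube {s : ℝ} (hπs : π < s) (hs : s ≤ 5) :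
    3 * |sin s| < s - s ^ 3 / 96 := by
  have hπ_lo := pi_gt_d6
  have hπ_hi := pi_lt_d2
  rcases le_or_gt s (π + 1) with hs1 | hs1
  · have hpoly : 3 * (s - π) < s - s ^ 3 / 96 := by
      nlinarith [mul_le_mul_of_nonneg_left (by nlinarith : s ^ 2 ≤ 18) (by linarith : 0 ≤ s)]
    linarith [abs_sin_le_sub_pi hπs.le]
  · have hpoly : 3 < s - s ^ 3 / 96 := by
      nlinarith [mul_le_mul_of_nonneg_left (by nlinarith : s ^ 2 ≤ 25) (by linarith : 0 ≤ s)]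
    linarith [abs_sin_le_one s]

lemma three_mul_abs_sin_mul_lt_mul_sin {a t : ℝ} (ha : 4 ≤ a) (hπ : π < a * t)
    (ht : t ≤ π / 2) : 3 * |sin (a * t)| < a * sin t := by
  have ht0 : 0 ≤ t := (pos_of_mul_pos_right (pi_pos.trans hπ) (by linarith)).le
  rcases le_or_gt (a * t) 5 with hs | hs
  · exact (three_mul_abs_sin_lt_sub_cube hπ hs).trans_le (mul_sub_cube_le_mul_sin ha ht0)
  · have hjordan : 2 / π * (a * t) ≤ a * sin t := by
      have := mul_le_mul_of_nonneg_left (mul_le_sin ht0 ht) (by linarith : (0 : ℝ) ≤ a)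
      linarith
    have hthree : 3 < 2 / π * (a * t) := by
      rw [div_mul_eq_mul_div, lt_div_iff₀ pi_pos]
      nlinarith [pi_lt_d2]
    linarith [abs_sin_le_one (a * t)]

theorem GA_bigger_one_third (A : ℤ) (hA : 4 ≤ A) (t : ℝ) (ht : t ∈ Set.Icc 0 (π / 2))
    (h : (1 : ℝ) / 3 ≤ |if t = 0 then 1 else Real.sin (A * t) / (A * Real.sin t)|) :
    t ≤ π / A := by
  have hA4 : (4 : ℝ) ≤ A := by exact_mod_cast hA
  have hApos : (0 : ℝ) < A := by linarith
  by_contra! hgt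
  have htpos : 0 < t := (div_pos pi_pos hApos).trans hgt
  have hπ : π < A * t := by rwa [div_lt_iff₀' hApos] at hgt
  have hdenom : 0 < (A : ℝ) * sin t :=
    mul_pos hApos (sin_pos_of_pos_of_lt_pi htpos (by linarith [ht.2, pi_pos]))
  have hlt := three_mul_abs_sin_mul_lt_mul_sin hA4 hπ ht.2
  rw [if_neg htpos.ne', abs_div, abs_of_pos hdenom, le_div_iff₀ hdenom] at h
  linarith
end

section
/- For every integer A ≥ 6 with A even and every t ∈ [π/2 − π/A, π/2 − π/(2A)], one has |sin(At)/(A·sin(t))| < 1/5. -/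
open Real

theorem GA_small_near_half_pi (A : ℤ) (hA : 6 ≤ A) (hAeven : Even A) (t : ℝ)
    (ht : t ∈ Set.Icc (π / 2 - π / A) (π / 2 - π / (2 * A))) :
    |Real.sin (A * t) / (A * Real.sin t)| < 1 / 5 := by
  obtain ⟨h1, h2⟩ := ht
  have hA6 : (6 : ℝ) ≤ (A : ℝ) := by exact_mod_cast hA
  have hπ := Real.pi_pos
  have hAt : π / (A : ℝ) ≤ π / 6 := by
    apply div_le_div_of_nonneg_left hπ.le (by norm_num) hA6
  have ht1 : π / 3 ≤ t := by linarith
  have ht2 : t ≤ π / 2 := by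
    have : 0 < π / (2 * (A : ℝ)) := by positivity
    linarith
  have hsin : Real.sin (π / 3) ≤ Real.sin t := by
    apply Real.strictMonoOn_sin.monotoneOn ⟨by linarith, by linarith⟩
      ⟨by linarith, ht2⟩ ht1
  rw [Real.sin_pi_div_three] at hsin
  have hsqrt : (5 / 3 : ℝ) < Real.sqrt 3 := by
    nlinarith [Real.sq_sqrt (by norm_num : (3:ℝ) ≥ 0), Real.sqrt_nonneg 3]
  have hst : (5 / 6 : ℝ) < Real.sin t := by linarith
  have hpos : (5 : ℝ) < (A : ℝ) * Real.sin t := by nlinarith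
  have hpos' : (0 : ℝ) < (A : ℝ) * Real.sin t := by linarith
  rw [abs_div, abs_of_pos hpos', div_lt_iff₀ hpos']
  have := Real.abs_sin_le_one ((A : ℝ) * t)
  nlinarith
end

section
/- For every integer A ≥ 2 and every t ∈ [2π/A, π/2], one has |sin(At)/(A·sin(t))| ≤ 1/4. -/
open Real

theorem GA_le_quarter (A : ℤ) (hA : 2 ≤ A) (t : ℝ)
    (ht : t ∈ Set.Icc (2 * π / A) (π / 2)) :
    |Real.sin (A * t) / (A * Real.sin t)| ≤ 1 / 4 := by
  obtain ⟨h1, h2⟩ := ht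
  have hπ := Real.pi_pos
  have hApos : (0:ℝ) < (A:ℝ) := by exact_mod_cast (by omega : (0:ℤ) < A)
  have hx0 : (0:ℝ) ≤ 2 * π / A := by positivity
  have hx2 : 2 * π / A ≤ π / 2 := le_trans h1 h2
  have hjordan : 2 / π * (2 * π / A) ≤ Real.sin (2 * π / A) :=
    Real.mul_le_sin hx0 hx2
  have hval : 2 / π * (2 * π / A) = 4 / A := by
    field_simp; ring
  have hsinx : (4:ℝ) / A ≤ Real.sin (2 * π / A) := hval ▸ hjordan
  have hmono : Real.sin (2 * π / A) ≤ Real.sin t := by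
    apply Real.sin_le_sin_of_le_of_le_pi_div_two (by linarith) h2 h1
  have hst : (4:ℝ) / A ≤ Real.sin t := le_trans hsinx hmono
  have hAs : (4:ℝ) ≤ A * Real.sin t := by
    have := mul_le_mul_of_nonneg_left hst (le_of_lt hApos)
    calc (4:ℝ) = A * (4 / A) := by field_simp
    _ ≤ A * Real.sin t := this
  have hpos : (0:ℝ) < A * Real.sin t := by linarith
  rw [abs_div, abs_of_pos hpos, div_le_div_iff₀ hpos (by norm_num)]
  have : |Real.sin (A * t)| ≤ 1 := Real.abs_sin_le_one _
  nlinarith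
end

section
/- For all s in [0, π/2], the function q(s) = 2cos³(s)sin(s)s² − cos³(s)sin(s) + cos(s)sin(s)s² − 4cos²(s)sin²(s)s − s³ + sin(s)cos(s) + s·sin²(s) satisfies q(s) ≤ 0. -/
/-!
Write `X = sin s ^ 2` and `Y = sin (2 * s)`. Since `Y ^ 2 = 4 * X * (1 - X)`,
`q s = Y * X ^ 3 - (s - Y / 2) * (s ^ 2 + X - 2 * X ^ 3 - (1 - X) * s * Y)`,
and in this form `q` only increases when `X` is replaced by a lower bound in its linear
occurrences, by an upper bound in its cubic ones, and `Y` by an upper bound (as long as the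
second factor stays nonnegative). The alternating Taylor bounds of `cos (2 * s)` and `sin (2 * s)`
of orders 8, 10 and 9 supply such bounds, and the resulting polynomial majorant of `q` is
nonpositive on `[0, π / 2]`. High orders are needed because `q` vanishes to order 9 at `0`.
-/

open Real
open scoped Nat

noncomputable def sinTaylor (n : ℕ) (x : ℝ) : ℝ :=
  ∑ k ∈ Finset.range n, (-1) ^ k * x ^ (2 * k + 1) / (2 * k + 1)!

noncomputable def cosTaylor (n : ℕ) (x : ℝ) : ℝ :=
  ∑ k ∈ Finset.range n, (-1) ^ k * x ^ (2 * k) / (2 * k)!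

theorem hasDerivAt_sinTaylor (n : ℕ) (x : ℝ) : HasDerivAt (sinTaylor n) (cosTaylor n x) x := by
  unfold sinTaylor cosTaylor
  refine HasDerivAt.fun_sum fun k _ => ?_
  refine (((hasDerivAt_pow (2 * k + 1) x).const_mul ((-1 : ℝ) ^ k)).div_const
    ((2 * k + 1)! : ℝ)).congr_deriv ?_
  rw [Nat.factorial_succ]
  push_cast
  field_simp

theorem hasDerivAt_cosTaylor_succ (n : ℕ) (x : ℝ) :
    HasDerivAt (cosTaylor (n + 1)) (-sinTaylor n x) x := by
  have hcos : cosTaylor (n + 1) =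
      fun y => ∑ k ∈ Finset.range n, -((-1 : ℝ) ^ k * y ^ (2 * k + 2) / (2 * k + 2)!) + 1 := by
    funext y
    simp only [cosTaylor, Finset.sum_range_succ']
    simp [pow_succ, mul_add, neg_div]
  rw [hcos, sinTaylor, ← Finset.sum_neg_distrib]
  refine (HasDerivAt.fun_sum fun k _ => ?_).add_const 1
  refine (((hasDerivAt_pow (2 * k + 2) x).const_mul ((-1 : ℝ) ^ k)).div_const
    ((2 * k + 2)! : ℝ)).neg.congr_deriv ?_
  rw [Nat.factorial_succ (2 * k + 1)]
  push_cast
  field_simp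
  ring

theorem nonneg_of_hasDerivAt_of_deriv_nonneg {f f' : ℝ → ℝ} (hf : ∀ t, HasDerivAt f (f' t) t)
    (hf₀ : f 0 = 0) (hf' : ∀ t, 0 ≤ t → 0 ≤ f' t) {x : ℝ} (hx : 0 ≤ x) : 0 ≤ f x := by
  have hmono : MonotoneOn f (Set.Ici 0) :=
    monotoneOn_of_hasDerivWithinAt_nonneg (convex_Ici 0)
      (fun t _ => (hf t).continuousAt.continuousWithinAt) (fun t _ => (hf t).hasDerivWithinAt)
      (fun t ht => hf' t (interior_subset ht))
  simpa [hf₀] using hmono Set.self_mem_Ici hx hx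

theorem cos_sin_sub_taylor_alternating (n : ℕ) {x : ℝ} (hx : 0 ≤ x) :
    0 ≤ (-1) ^ (n + 1) * (cos x - cosTaylor (n + 1) x) ∧
      0 ≤ (-1) ^ (n + 1) * (sin x - sinTaylor (n + 1) x) := by
  induction n generalizing x with
  | zero => simpa [cosTaylor, sinTaylor] using ⟨cos_le_one x, sin_le hx⟩
  | succ n ih =>
    have hcos : ∀ t, 0 ≤ t → 0 ≤ (-1) ^ (n + 2) * (cos t - cosTaylor (n + 2) t) := by
      refine fun t ht => nonneg_of_hasDerivAt_of_deriv_nonneg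
        (f := fun y => (-1) ^ (n + 2) * (cos y - cosTaylor (n + 2) y)) (fun y => ?_)
        (by simp [cosTaylor, Finset.sum_range_succ']) (fun y hy => (ih hy).2) ht
      refine (((hasDerivAt_cos y).sub (hasDerivAt_cosTaylor_succ (n + 1) y)).const_mul
        ((-1 : ℝ) ^ (n + 2))).congr_deriv ?_
      ring
    refine ⟨hcos x hx, nonneg_of_hasDerivAt_of_deriv_nonneg
      (f := fun y => (-1) ^ (n + 2) * (sin y - sinTaylor (n + 2) y)) (fun y => ?_)
      (by simp [sinTaylor]) hcos hx⟩
    exact ((hasDerivAt_sin y).sub (hasDerivAt_sinTaylor (n + 2) y)).const_mul _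

theorem cos_le_cosTaylor (m : ℕ) {x : ℝ} (hx : 0 ≤ x) : cos x ≤ cosTaylor (2 * m + 1) x := by
  have h := (cos_sin_sub_taylor_alternating (2 * m) hx).1
  rw [pow_succ, pow_mul] at h
  norm_num at h
  linarith

theorem cosTaylor_le_cos (m : ℕ) {x : ℝ} (hx : 0 ≤ x) : cosTaylor (2 * m + 2) x ≤ cos x := by
  have h := (cos_sin_sub_taylor_alternating (2 * m + 1) hx).1
  rw [show 2 * m + 1 + 1 = 2 * (m + 1) by ring] at h ⊢
  rw [pow_mul] at h
  norm_num at h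
  linarith

theorem sin_le_sinTaylor (m : ℕ) {x : ℝ} (hx : 0 ≤ x) : sin x ≤ sinTaylor (2 * m + 1) x := by
  have h := (cos_sin_sub_taylor_alternating (2 * m) hx).2
  rw [pow_succ, pow_mul] at h
  norm_num at h
  linarith

noncomputable def q (s : ℝ) : ℝ :=
  2 * cos s ^ 3 * sin s * s ^ 2 - cos s ^ 3 * sin s + cos s * sin s * s ^ 2
    - 4 * cos s ^ 2 * sin s ^ 2 * s - s ^ 3 + sin s * cos s + s * sin s ^ 2

def qFactor (s l u h : ℝ) : ℝ := s ^ 2 + l - 2 * u ^ 3 - (1 - l) * s * h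

noncomputable def qBound (s l u h : ℝ) : ℝ := h * u ^ 3 - (s - h / 2) * qFactor s l u h

theorem q_eq_qBound (s : ℝ) : q s = qBound s (sin s ^ 2) (sin s ^ 2) (sin (2 * s)) := by
  rw [qBound, qFactor, sin_two_mul, ← cos_sq', q]
  linear_combination (2 * s * cos s ^ 2 * sin s ^ 2 - cos s * sin s
    - 2 * s * sin s ^ 2 - 2 * s * sin s ^ 4) * sin_sq_add_cos_sq s

theorem qBound_le_qBound {s X Y l u h : ℝ} (hs : 0 ≤ s) (hX : 0 ≤ X) (hX₁ : X ≤ 1) (hY : 0 ≤ Y)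
    (hYs : Y ≤ 2 * s) (hl : l ≤ X) (hu : X ≤ u) (hh : Y ≤ h) (hF : 0 ≤ qFactor s l u h) :
    qBound s X X Y ≤ qBound s l u h := by
  have hX3 : X ^ 3 ≤ u ^ 3 := pow_le_pow_left₀ hX hu 3
  have hcubic : Y * X ^ 3 ≤ h * u ^ 3 := mul_le_mul hh hX3 (pow_nonneg hX 3) (hY.trans hh)
  have hcross : (1 - X) * (s * Y) ≤ (1 - l) * (s * h) :=
    mul_le_mul (by linarith) (mul_le_mul_of_nonneg_left hh hs) (by positivity) (by linarith)
  have hfactor : qFactor s l u h ≤ qFactor s X X Y := by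
    simp only [qFactor]
    linarith
  have hprod : (s - h / 2) * qFactor s l u h ≤ (s - Y / 2) * qFactor s X X Y :=
    mul_le_mul (by linarith) hfactor hF (by linarith)
  simp only [qBound]
  linarith

noncomputable def sinSqLower (s : ℝ) : ℝ := (1 - cosTaylor 5 (2 * s)) / 2

noncomputable def sinSqUpper (s : ℝ) : ℝ := (1 - cosTaylor 6 (2 * s)) / 2

theorem sin_sq_eq_one_sub_cos_two_mul_div_two (s : ℝ) : sin s ^ 2 = (1 - cos (2 * s)) / 2 := by
  rw [sin_sq, cos_sq]
  ring

theorem sinSqLower_le_sin_sq {s : ℝ} (hs : 0 ≤ s) : sinSqLower s ≤ sin s ^ 2 := by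
  rw [sin_sq_eq_one_sub_cos_two_mul_div_two, sinSqLower]
  linarith [cos_le_cosTaylor 2 (by positivity : 0 ≤ 2 * s)]

theorem sin_sq_le_sinSqUpper {s : ℝ} (hs : 0 ≤ s) : sin s ^ 2 ≤ sinSqUpper s := by
  rw [sin_sq_eq_one_sub_cos_two_mul_div_two, sinSqUpper]
  linarith [cosTaylor_le_cos 2 (by positivity : 0 ≤ 2 * s)]

/- The two polynomial inequalities below are Bernstein certificates in `v = s ^ 2` on
`[0, 617 / 250] ⊇ [0, (π / 2) ^ 2]`, after factoring out `s ^ 4`, resp. `s ^ 9`. -/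

theorem qFactor_taylor_nonneg {s : ℝ} (hsB : s ^ 2 ≤ 617 / 250) :
    0 ≤ qFactor s (sinSqLower s) (sinSqUpper s) (sinTaylor 5 (2 * s)) := by
  have hb : ∀ i j : ℕ, 0 ≤ s ^ 4 * (s ^ 2) ^ i * (617 / 250 - s ^ 2) ^ j := fun i j =>
    mul_nonneg (by positivity) (pow_nonneg (by linarith) j)
  simp only [qFactor, sinSqLower, sinSqUpper, cosTaylor, sinTaylor, Finset.sum_range_succ,
    Finset.sum_range_zero]
  norm_num [Nat.factorial]
  linarith [hb 0 13, hb 1 12, hb 2 11, hb 3 10, hb 4 9, hb 5 8, hb 6 7, hb 7 6, hb 8 5, hb 9 4,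
    hb 10 3, hb 11 2, hb 12 1, hb 13 0]

theorem qBound_taylor_nonpos {s : ℝ} (hs : 0 ≤ s) (hsB : s ^ 2 ≤ 617 / 250) :
    qBound s (sinSqLower s) (sinSqUpper s) (sinTaylor 5 (2 * s)) ≤ 0 := by
  have hb : ∀ i j : ℕ, 0 ≤ s ^ 9 * (s ^ 2) ^ i * (617 / 250 - s ^ 2) ^ j := fun i j =>
    mul_nonneg (by positivity) (pow_nonneg (by linarith) j)
  simp only [qBound, qFactor, sinSqLower, sinSqUpper, cosTaylor, sinTaylor,
    Finset.sum_range_succ, Finset.sum_range_zero]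
  norm_num [Nat.factorial]
  linarith [hb 0 11, hb 1 10, hb 2 9, hb 3 8, hb 4 7, hb 5 6, hb 6 5, hb 7 4, hb 8 3, hb 9 2,
    hb 10 1, hb 11 0]

theorem q_nonpos (s : ℝ) (hs : s ∈ Set.Icc 0 (π / 2)) :
    2 * Real.cos s ^ 3 * Real.sin s * s ^ 2 - Real.cos s ^ 3 * Real.sin s
      + Real.cos s * Real.sin s * s ^ 2 - 4 * Real.cos s ^ 2 * Real.sin s ^ 2 * s
      - s ^ 3 + Real.sin s * Real.cos s + s * Real.sin s ^ 2 ≤ 0 := by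
  obtain ⟨hs₀, hsπ⟩ := hs
  have hsB : s ^ 2 ≤ 617 / 250 := by nlinarith [pi_lt_d4]
  have h2s : 0 ≤ 2 * s := by positivity
  change q s ≤ 0
  calc q s = qBound s (sin s ^ 2) (sin s ^ 2) (sin (2 * s)) := q_eq_qBound s
    _ ≤ qBound s (sinSqLower s) (sinSqUpper s) (sinTaylor 5 (2 * s)) :=
      qBound_le_qBound hs₀ (sq_nonneg _) (sin_sq_le_one s)
        (sin_nonneg_of_nonneg_of_le_pi h2s (by linarith)) (sin_le h2s) (sinSqLower_le_sin_sq hs₀)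
        (sin_sq_le_sinSqUpper hs₀) (sin_le_sinTaylor 2 h2s) (qFactor_taylor_nonneg hsB)
    _ ≤ 0 := qBound_taylor_nonpos hs₀ hsB
end
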